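/- arXiv:1709.03807 — 4 statements merged into one kernel-verified Lean document; each statement's English description precedes it below -/
import Mathlib

section
/- If $\hat{g}^*$ is the isotonic regression of a vector $\hat{g} \in \mathbb{R}^s$ with positive weights $w$, then for every convex function $\Phi: \mathbb{R} \to \mathbb{R}$ and every isotonic vector $h \in \mathbb{R}^s$ one has $\sum_{i=1}^s \Phi(\hat{g}^*_i - h_i) w_i \le \sum_{i=1}^s \Phi(\hat{g}_i - h_i) w_i$. -/
open Finset

/-- General secant monotonicity for convex functions on ℝ. -/
lemma my_secant_le {Φ : ℝ → ℝ} (hΦ : ConvexOn ℝ Set.univ Φ) {a b c d : ℝ}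
    (hab : a < b) (hcd : c < d) (hac : a ≤ c) (hbd : b ≤ d) :
    (Φ b - Φ a) / (b - a) ≤ (Φ d - Φ c) / (d - c) := by
  have had : a < d := lt_of_lt_of_le hab hbd
  have h1 : (Φ b - Φ a) / (b - a) ≤ (Φ d - Φ a) / (d - a) :=
    hΦ.secant_mono trivial trivial trivial hab.ne' had.ne' hbd
  have h2 : (Φ a - Φ d) / (a - d) ≤ (Φ c - Φ d) / (c - d) :=
    hΦ.secant_mono trivial trivial trivial had.ne hcd.ne hac
  have e1 : (Φ a - Φ d) / (a - d) = (Φ d - Φ a) / (d - a) := by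
    rw [← neg_div_neg_eq]; ring_nf
  have e2 : (Φ c - Φ d) / (c - d) = (Φ d - Φ c) / (d - c) := by
    rw [← neg_div_neg_eq]; ring_nf
  rw [e1, e2] at h2
  linarith

/-- error reduction property of isotonic regression for convex Φ. -/
theorem stmt_0 {s : ℕ} (r : Fin s → Fin s → Prop)
    (hrefl : ∀ i, r i i) (htrans : ∀ i j k, r i j → r j k → r i k)
    (w g gstar : Fin s → ℝ) (hw : ∀ i, 0 < w i)
    (hiso : ∀ i j, r i j → gstar i ≤ gstar j)
    (hmin : ∀ ξ : Fin s → ℝ, (∀ i j, r i j → ξ i ≤ ξ j) →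
      ∑ i, (gstar i - g i) ^ 2 * w i ≤ ∑ i, (ξ i - g i) ^ 2 * w i)
    (Φ : ℝ → ℝ) (hΦ : ConvexOn ℝ Set.univ Φ)
    (h : Fin s → ℝ) (hh : ∀ i j, r i j → h i ≤ h j) :
    ∑ i, Φ (gstar i - h i) * w i ≤ ∑ i, Φ (g i - h i) * w i := by
  classical
  -- a subgradient selection φ : monotone, with subgradient inequality at the needed points
  obtain ⟨φ, hφmono, hsub⟩ : ∃ φ : ℝ → ℝ, (∀ x y : ℝ, x ≤ y → φ x ≤ φ y) ∧
      ∀ i, Φ (gstar i - h i) + φ (gstar i - h i) * (g i - gstar i) ≤ Φ (g i - h i) := by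
    -- ε : positive lower bound on gstar i - g i whenever g i < gstar i
    obtain ⟨ε, hε0, hεle⟩ : ∃ ε : ℝ, 0 < ε ∧ ∀ i, g i < gstar i → ε ≤ gstar i - g i := by
      set E : Finset ℝ :=
        insert 1 ((univ.filter (fun i => g i < gstar i)).image fun i => gstar i - g i) with hE
      have hEne : E.Nonempty := ⟨1, mem_insert_self _ _⟩
      have hall : ∀ x ∈ E, (0:ℝ) < x := by
        intro x hx
        rw [hE, mem_insert] at hx
        rcases hx with rfl | h2
        · norm_num
        · obtain ⟨i, hi, rfl⟩ := mem_image.1 h2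
          rw [mem_filter] at hi; linarith [hi.2]
      refine ⟨E.min' hEne, hall _ (E.min'_mem hEne), fun i hi => E.min'_le _ ?_⟩
      rw [hE]
      exact mem_insert_of_mem (mem_image_of_mem _ (mem_filter.2 ⟨mem_univ _, hi⟩))
    refine ⟨fun x => (Φ x - Φ (x - ε)) / ε, ?_, ?_⟩
    · -- monotone
      intro x y hxy
      rcases eq_or_lt_of_le hxy with rfl | hlt
      · exact le_refl _
      have hs := my_secant_le hΦ (a := x - ε) (b := x) (c := y - ε) (d := y)
        (by linarith) (by linarith) (by linarith) hlt.le
      have e1 : x - (x - ε) = ε := by ring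
      have e2 : y - (y - ε) = ε := by ring
      rw [e1, e2] at hs
      exact hs
    · -- subgradient inequality
      intro i
      set x := gstar i - h i with hx
      set y := g i - h i with hy
      have hyx : y - x = g i - gstar i := by rw [hx, hy]; ring
      rcases lt_trichotomy (g i) (gstar i) with hlt | heq | hgt
      · have hyle : y ≤ x - ε := by
          have := hεle i hlt; rw [hx, hy]; linarith
        have hsl : (Φ x - Φ y) / (x - y) ≤ (Φ x - Φ (x - ε)) / ε := by
          rcases eq_or_lt_of_le hyle with heq2 | hlt2
          · rw [heq2]
            have e : x - (x - ε) = ε := by ring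
            rw [e]
          · have hs := my_secant_le hΦ (a := y) (b := x) (c := x - ε) (d := x)
              (by linarith) (by linarith) hlt2.le (le_refl x)
            have e1 : x - (x - ε) = ε := by ring
            rw [e1] at hs
            exact hs
        have hxy0 : 0 < x - y := by linarith
        have hd := (div_le_iff₀ hxy0).1 hsl
        have e : (Φ x - Φ (x - ε)) / ε * (g i - gstar i)
            = -((Φ x - Φ (x - ε)) / ε * (x - y)) := by rw [← hyx]; ring
        rw [e]
        linarith
      · have hxy : x = y := by rw [hx, hy, heq]
        rw [heq, hxy]; simp
      · have hxy : x < y := by rw [hx, hy]; linarith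
        have hsl : (Φ x - Φ (x - ε)) / ε ≤ (Φ y - Φ x) / (y - x) := by
          have hs := my_secant_le hΦ (a := x - ε) (b := x) (c := x) (d := y)
            (by linarith) hxy (by linarith) hxy.le
          have e1 : x - (x - ε) = ε := by ring
          rw [e1] at hs
          exact hs
        have hxy0 : 0 < y - x := by linarith
        have hd := (le_div_iff₀ hxy0).1 hsl
        have e : (Φ x - Φ (x - ε)) / ε * (g i - gstar i)
            = (Φ x - Φ (x - ε)) / ε * (y - x) := by rw [hyx]
        rw [e]
        linarith
  -- δ : positive lower bound on gaps of gstar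
  obtain ⟨δ, hδ0, hδle⟩ : ∃ δ : ℝ, 0 < δ ∧
      ∀ i j, gstar i < gstar j → δ ≤ gstar j - gstar i := by
    set D : Finset ℝ :=
      insert 1 (((univ ×ˢ univ).filter (fun p : Fin s × Fin s => gstar p.1 < gstar p.2)).image
        fun p => gstar p.2 - gstar p.1) with hD
    have hDne : D.Nonempty := ⟨1, mem_insert_self _ _⟩
    have hall : ∀ x ∈ D, (0:ℝ) < x := by
      intro x hx
      rw [hD, mem_insert] at hx
      rcases hx with rfl | h2
      · norm_num
      · obtain ⟨p, hp, rfl⟩ := mem_image.1 h2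
        rw [mem_filter] at hp; linarith [hp.2]
    refine ⟨D.min' hDne, hall _ (D.min'_mem hDne), fun i j hij => D.min'_le _ ?_⟩
    rw [hD]
    exact mem_insert_of_mem (Finset.mem_image.2
      ⟨(i, j), Finset.mem_filter.2 ⟨by simp, hij⟩, rfl⟩)
  -- the perturbation direction and a bound on it
  set v : Fin s → ℝ := fun i => -(φ (gstar i - h i)) with hv
  obtain ⟨M, hM0, hMv⟩ : ∃ M : ℝ, 0 < M ∧ ∀ i, |v i| ≤ M := by
    refine ⟨(∑ i, |v i|) + 1, by positivity, fun i => ?_⟩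
    have := Finset.single_le_sum (f := fun i => |v i|) (fun j _ => abs_nonneg _) (mem_univ i)
    linarith
  set t0 : ℝ := δ / (2 * M) with ht0
  have ht00 : 0 < t0 := by positivity
  -- isotonicity of the perturbed vector
  have hISO : ∀ t : ℝ, 0 < t → t ≤ t0 → ∀ i j, r i j →
      gstar i + t * v i ≤ gstar j + t * v j := by
    intro t ht htle i j hij
    rcases eq_or_lt_of_le (hiso i j hij) with heq | hlt
    · have hhij : h i ≤ h j := hh i j hij
      have hle : gstar j - h j ≤ gstar i - h i := by rw [← heq]; linarith
      have hφle := hφmono _ _ hle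
      have hvle : v i ≤ v j := by rw [hv]; simp; linarith
      have := mul_le_mul_of_nonneg_left hvle ht.le
      linarith
    · have hgap := hδle i j hlt
      have h1 : t * v i ≤ t * M :=
        mul_le_mul_of_nonneg_left (le_trans (le_abs_self _) (hMv i)) ht.le
      have h2 : -(t * M) ≤ t * v j := by
        have h3 : -(v j) ≤ M := le_trans (neg_le_abs _) (hMv j)
        nlinarith
      have h4 : t * M ≤ δ / 2 := by
        have h5 := mul_le_mul_of_nonneg_right htle hM0.le
        have h6 : t0 * M = δ / 2 := by rw [ht0]; field_simp
        linarith
      linarith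
  -- key inequality : ∑ (g i - gstar i) * v i * w i ≤ 0
  have key : ∑ i, (g i - gstar i) * v i * w i ≤ 0 := by
    by_contra hA
    push_neg at hA
    set A : ℝ := ∑ i, (g i - gstar i) * v i * w i with hAdef
    set C : ℝ := ∑ i, v i ^ 2 * w i with hC
    have hC0 : 0 ≤ C := sum_nonneg (fun i _ => mul_nonneg (sq_nonneg _) (hw i).le)
    set t : ℝ := min t0 (A / (C + 1)) with htdef
    have ht : 0 < t := lt_min ht00 (div_pos hA (by linarith))
    have htle : t ≤ t0 := min_le_left _ _
    have htle2 : t ≤ A / (C + 1) := min_le_right _ _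
    have hm := hmin (fun i => gstar i + t * v i) (hISO t ht htle)
    have expand : ∑ i, (gstar i + t * v i - g i) ^ 2 * w i
        = ∑ i, (gstar i - g i) ^ 2 * w i - 2 * t * A + t ^ 2 * C := by
      rw [hAdef, hC, Finset.mul_sum, Finset.mul_sum, ← Finset.sum_sub_distrib,
        ← Finset.sum_add_distrib]
      refine Finset.sum_congr rfl (fun i _ => by ring)
    rw [expand] at hm
    have h2tA : 2 * t * A ≤ t ^ 2 * C := by linarith
    have h2A : 2 * A ≤ t * C := by nlinarith
    have hAC : t * C ≤ A / (C + 1) * C :=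
      mul_le_mul_of_nonneg_right htle2 hC0
    have hfrac : A / (C + 1) * C < A := by
      rw [div_mul_eq_mul_div, div_lt_iff₀ (by linarith)]
      nlinarith
    linarith
  -- assemble
  have hsum1 : ∑ i, (Φ (gstar i - h i) + φ (gstar i - h i) * (g i - gstar i)) * w i
      ≤ ∑ i, Φ (g i - h i) * w i :=
    Finset.sum_le_sum (fun i _ => mul_le_mul_of_nonneg_right (hsub i) (hw i).le)
  have hsum2 : ∑ i, (Φ (gstar i - h i) + φ (gstar i - h i) * (g i - gstar i)) * w i
      = ∑ i, Φ (gstar i - h i) * w i - ∑ i, (g i - gstar i) * v i * w i := by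
    rw [← Finset.sum_sub_distrib]
    refine Finset.sum_congr rfl (fun i _ => ?_)
    rw [hv]; ring
  linarith
end

section
/- If $g^*$ is the isotonic regression with positive weights $w$ of $g \in \mathbb{R}^s$ over a finite pre-ordered index set, then the weighted sums agree: $\sum_{i=1}^s g_i w_i = \sum_{i=1}^s g^*_i w_i$. -/
open Finset

/-- the isotonic regression preserves the weighted sum. -/
theorem stmt_2 {s : ℕ} (r : Fin s → Fin s → Prop)
    (hrefl : ∀ i, r i i) (htrans : ∀ i j k, r i j → r j k → r i k)
    (w g gstar : Fin s → ℝ) (hw : ∀ i, 0 < w i)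
    (hiso : ∀ i j, r i j → gstar i ≤ gstar j)
    (hmin : ∀ ξ : Fin s → ℝ, (∀ i j, r i j → ξ i ≤ ξ j) →
      ∑ i, (gstar i - g i) ^ 2 * w i ≤ ∑ i, (ξ i - g i) ^ 2 * w i) :
    ∑ i, g i * w i = ∑ i, gstar i * w i := by
  rcases Nat.eq_zero_or_pos s with hs | hs
  · subst hs; simp
  set A : ℝ := ∑ i, (gstar i - g i) * w i with hA
  set B : ℝ := ∑ i, w i with hB
  have hBpos : 0 < B := by
    apply Finset.sum_pos (fun i _ => hw i)
    exact Finset.univ_nonempty_iff.mpr ⟨⟨0, hs⟩⟩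
  have key : ∀ t : ℝ, 0 ≤ 2 * t * A + t ^ 2 * B := by
    intro t
    have h := hmin (fun i => gstar i + t) (fun i j hij => by
      simpa using hiso i j hij)
    have : ∑ i, (gstar i + t - g i) ^ 2 * w i
        = ∑ i, (gstar i - g i) ^ 2 * w i + (2 * t * A + t ^ 2 * B) := by
      rw [hA, hB, Finset.mul_sum, Finset.mul_sum, ← Finset.sum_add_distrib,
        ← Finset.sum_add_distrib]
      apply Finset.sum_congr rfl
      intro i _
      ring
    rw [this] at h
    linarith
  have hA0 : A = 0 := by
    by_contra hA0
    have h := key (-A / B)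
    have hAB : 2 * (-A / B) * A + (-A / B) ^ 2 * B = -(A ^ 2 / B) := by
      field_simp; ring
    rw [hAB] at h
    have h2 : 0 < A ^ 2 / B := div_pos (sq_pos_of_ne_zero hA0) hBpos
    linarith
  have : ∑ i, gstar i * w i - ∑ i, g i * w i = A := by
    rw [hA, ← Finset.sum_sub_distrib]
    apply Finset.sum_congr rfl; intro i _; ring
  linarith
end

section
/- Let $\mathcal{X}$ be a finite non-decomposable pre-ordered set, $\mathring{g}$ an isotonic function on $\mathcal{X}$ with comparable level sets $\mathcal{X}^{(1)},\dots,\mathcal{X}^{(m)}$, and let $\tilde\varepsilon > 0$ be the smallest comparable level distance of $\mathring{g}$. If $g: \mathcal{X} \to \mathbb{R}$ satisfies $\sup_{x}|g(x) - \mathring{g}(x)| < \tilde\varepsilon/2$, then the isotonic regression $g^*$ of $g$ with positive weights equals, on each $\mathcal{X}^{(l)}$, the isotonic regression of the restriction $g^{(l)}$ of $g$ to $\mathcal{X}^{(l)}$. -/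
open Finset

/-- The (weighted) isotonic regression predicate over a finite pre-ordered index set. -/
def IsIsoReg {ι : Type*} [Fintype ι] (r : ι → ι → Prop) (w g gstar : ι → ℝ) : Prop :=
  (∀ i j, r i j → gstar i ≤ gstar j) ∧
  ∀ ξ : ι → ℝ, (∀ i j, r i j → ξ i ≤ ξ j) →
    ∑ i, (gstar i - g i) ^ 2 * w i ≤ ∑ i, (ξ i - g i) ^ 2 * w i

private lemma sq_clamp {a b t u : ℝ} (h1 : a ≤ u) (h2 : u ≤ b) :
    (max a (min t b) - u) ^ 2 ≤ (t - u) ^ 2 := by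
  rcases le_total t a with h | h
  · rw [min_eq_left (h.trans (h1.trans h2)), max_eq_left h]
    nlinarith
  · rcases le_total t b with h' | h'
    · rw [min_eq_left h', max_eq_right h]
    · rw [min_eq_right h', max_eq_right (h1.trans h2)]
      nlinarith

/-- if `g` is uniformly within half of the smallest comparable level
distance of the isotonic function `g0`, then on each comparable level set of `g0`
the isotonic regression of `g` equals the isotonic regression of the restriction
of `g` to that level set. -/
theorem stmt_9 {X : Type*} [Fintype X] (r : X → X → Prop)
    (hrefl : ∀ x, r x x) (htrans : ∀ x y z, r x y → r y z → r x z)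
    (g0 : X → ℝ) (hg0 : ∀ x y, r x y → g0 x ≤ g0 y)
    {m : ℕ} (L : X → Fin m) (val : Fin m → ℝ)
    (hconst : ∀ x, g0 x = val (L x))
    (hclosed : ∀ x y, (r x y ∨ r y x) → g0 x = g0 y → L x = L y)
    (hconn : ∀ x y, L x = L y →
      Relation.ReflTransGen (fun a b => (r a b ∨ r b a) ∧ g0 a = g0 b) x y)
    (εt : ℝ) (hεt : 0 < εt)
    (hsep : ∀ l l' : Fin m, l ≠ l' →
      (∃ x1 x2 : X, L x1 = l ∧ L x2 = l' ∧ (r x1 x2 ∨ r x2 x1)) →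
      εt ≤ |val l' - val l|)
    (w g gstar : X → ℝ) (hw : ∀ x, 0 < w x)
    (hbound : ∀ x, |g x - g0 x| < εt / 2)
    (hreg : IsIsoReg r w g gstar) :
    ∀ l : Fin m,
      IsIsoReg (fun a b : {x // L x = l} => r a b)
        (fun a => w a) (fun a => g a) (fun a => gstar a) := by
  classical
  -- g lies in the open band around g0
  have hgband : ∀ x, g0 x - εt / 2 < g x ∧ g x < g0 x + εt / 2 := by
    intro x
    have := abs_lt.mp (hbound x)
    constructor <;> linarith [this.1, this.2]
  -- Step 1: gstar lies in the closed band around g0.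
  set h : X → ℝ := fun x => max (g0 x - εt / 2) (min (gstar x) (g0 x + εt / 2)) with hh
  have hmono : ∀ i j, r i j → h i ≤ h j := by
    intro i j hij
    have h1 := hg0 i j hij
    have h2 := hreg.1 i j hij
    exact max_le_max (by linarith) (min_le_min h2 (by linarith))
  have hterm : ∀ x ∈ Finset.univ, (h x - g x) ^ 2 * w x ≤ (gstar x - g x) ^ 2 * w x := by
    intro x _
    have hb := hgband x
    exact mul_le_mul_of_nonneg_right (sq_clamp hb.1.le hb.2.le) (hw x).le
  have hsum : ∑ x, (h x - g x) ^ 2 * w x = ∑ x, (gstar x - g x) ^ 2 * w x :=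
    le_antisymm (Finset.sum_le_sum hterm) (hreg.2 h hmono)
  have hpt : ∀ x, (h x - g x) ^ 2 * w x = (gstar x - g x) ^ 2 * w x := by
    intro x
    exact (Finset.sum_eq_sum_iff_of_le hterm).mp hsum x (Finset.mem_univ x)
  have hband : ∀ x, g0 x - εt / 2 ≤ gstar x ∧ gstar x ≤ g0 x + εt / 2 := by
    intro x
    have hsq : (h x - g x) ^ 2 = (gstar x - g x) ^ 2 :=
      mul_right_cancel₀ (ne_of_gt (hw x)) (hpt x)
    have hb := hgband x
    have hab : g0 x - εt / 2 ≤ g0 x + εt / 2 := by linarith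
    constructor
    · by_contra hc
      push_neg at hc
      have hx : h x = g0 x - εt / 2 := by
        rw [hh]
        simp only
        rw [min_eq_left (hc.le.trans hab), max_eq_left hc.le]
      rw [hx] at hsq
      nlinarith [hb.1, hc]
    · by_contra hc
      push_neg at hc
      have hx : h x = g0 x + εt / 2 := by
        rw [hh]
        simp only
        rw [min_eq_right hc.le, max_eq_right hab]
      rw [hx] at hsq
      nlinarith [hb.2, hc]
  -- Main part
  intro l
  constructor
  · intro a b hab
    exact hreg.1 a b hab
  · intro ξ hξ
    set a : ℝ := val l - εt / 2 with ha
    set b : ℝ := val l + εt / 2 with hb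
    have hab : a ≤ b := by rw [ha, hb]; linarith
    set Ξ : X → ℝ := fun x => if hx : L x = l then max a (min (ξ ⟨x, hx⟩) b) else gstar x
      with hΞ
    -- comparability of different levels forces separation
    have hsep' : ∀ x y : X, r x y → L x ≠ L y → val (L x) + εt ≤ val (L y) := by
      intro x y hxy hne
      have h1 : g0 x ≤ g0 y := hg0 x y hxy
      have h2 : g0 x ≠ g0 y := fun he => hne (hclosed x y (Or.inl hxy) he)
      have h3 : εt ≤ |val (L y) - val (L x)| :=
        hsep (L x) (L y) hne ⟨x, y, rfl, rfl, Or.inl hxy⟩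
      rw [hconst x, hconst y] at h1 h2
      rw [abs_of_nonneg (by linarith [lt_of_le_of_ne h1 h2])] at h3
      linarith
    have hΞmono : ∀ i j, r i j → Ξ i ≤ Ξ j := by
      intro i j hij
      rw [hΞ]
      simp only
      by_cases hi : L i = l <;> by_cases hj : L j = l
      · rw [dif_pos hi, dif_pos hj]
        exact max_le_max le_rfl
          (min_le_min (hξ ⟨i, hi⟩ ⟨j, hj⟩ hij) le_rfl)
      · rw [dif_pos hi, dif_neg hj]
        have hs := hsep' i j hij (by rw [hi]; exact fun he => hj he.symm)
        rw [hi] at hs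
        have : max a (min (ξ ⟨i, hi⟩) b) ≤ b := max_le (by linarith) (min_le_right _ _)
        have h2 := (hband j).1
        rw [hconst j] at h2
        calc max a (min (ξ ⟨i, hi⟩) b) ≤ b := this
          _ ≤ gstar j := by rw [hb]; linarith
      · rw [dif_neg hi, dif_pos hj]
        have hs := hsep' i j hij (by rw [hj]; exact fun he => hi he)
        rw [hj] at hs
        have h2 := (hband i).2
        rw [hconst i] at h2
        calc gstar i ≤ a := by rw [ha]; linarith
          _ ≤ max a (min (ξ ⟨j, hj⟩) b) := le_max_left _ _
      · rw [dif_neg hi, dif_neg hj]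
        exact hreg.1 i j hij
    have hmain := hreg.2 Ξ hΞmono
    -- split sums over the level set
    set s : Finset X := Finset.univ.filter (fun x => L x = l) with hs
    have hmem : ∀ x, x ∈ s ↔ L x = l := by
      intro x; simp [hs]
    have hsplit : ∀ F : X → ℝ,
        ∑ x, F x = ∑ x ∈ s, F x + ∑ x ∈ Finset.univ.filter (fun x => ¬ L x = l), F x := by
      intro F
      rw [hs]
      exact (Finset.sum_filter_add_sum_filter_not _ _ _).symm
    rw [hsplit (fun x => (gstar x - g x) ^ 2 * w x), hsplit (fun x => (Ξ x - g x) ^ 2 * w x)]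
      at hmain
    have hoff : ∑ x ∈ Finset.univ.filter (fun x => ¬ L x = l), (Ξ x - g x) ^ 2 * w x
        = ∑ x ∈ Finset.univ.filter (fun x => ¬ L x = l), (gstar x - g x) ^ 2 * w x := by
      apply Finset.sum_congr rfl
      intro x hx
      have hx' : ¬ L x = l := (Finset.mem_filter.mp hx).2
      rw [hΞ]
      simp only
      rw [dif_neg hx']
    rw [hoff] at hmain
    have hlev : ∑ x ∈ s, (gstar x - g x) ^ 2 * w x ≤ ∑ x ∈ s, (Ξ x - g x) ^ 2 * w x := by
      linarith
    have hsub1 : ∑ x ∈ s, (gstar x - g x) ^ 2 * w x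
        = ∑ x : {x // L x = l}, (gstar x.1 - g x.1) ^ 2 * w x.1 :=
      Finset.sum_subtype s hmem _
    have hsub2 : ∑ x ∈ s, (Ξ x - g x) ^ 2 * w x
        = ∑ x : {x // L x = l}, (Ξ x.1 - g x.1) ^ 2 * w x.1 :=
      Finset.sum_subtype s hmem _
    rw [hsub1, hsub2] at hlev
    refine hlev.trans (Finset.sum_le_sum ?_)
    intro x _
    have hx : L x.1 = l := x.2
    have hΞx : Ξ x.1 = max a (min (ξ x) b) := by
      rw [hΞ]
      simp only
      rw [dif_pos hx]
    rw [hΞx]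
    have hb1 := hgband x.1
    rw [hconst x.1, hx] at hb1
    exact mul_le_mul_of_nonneg_right (sq_clamp (by rw [ha]; linarith [hb1.1])
      (by rw [hb]; linarith [hb1.2])) (hw x.1).le
end

section
/- Under Assumption: $s < \infty$, $\hat{g}_n \to \mathring{g}$ in probability with $\mathring{g}$ isotonic, and $B_n(\hat{g}_n - \mathring{g}) \Rightarrow \lambda$ where $B_n = \mathrm{diag}(n^{q_1},\dots,n^{q_s})$ with $q_i > 0$ constant on each comparable level index set of $\mathring{g}$. Then $B_n(\hat{g}_n^* - \mathring{g}) \Rightarrow \varphi(\lambda)$, where $\hat{g}_n^*$ is the isotonic regression of $\hat{g}_n$ with positive weights $w$, and $\varphi: \mathbb{R}^s \to \mathbb{R}^s$ maps a vector $\theta$ to the concatenation of the separate isotonic regressions of the restrictions of $\theta$ to the comparable level sets of $\mathring{g}$. -/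
open Finset Filter MeasureTheory

namespace IsIsoReg

variable {ι : Type*} [Fintype ι] {r : ι → ι → Prop} {w g p : ι → ℝ}

/-- The variational inequality of the projection onto the isotonic cone, obtained by
differentiating the objective along the segment from `p` to `ξ`. -/
theorem sum_mul_nonpos (h : IsIsoReg r w g p) {ξ : ι → ℝ} (hξ : ∀ i j, r i j → ξ i ≤ ξ j) :
    ∑ i, (g i - p i) * (ξ i - p i) * w i ≤ 0 := by
  set A := ∑ i, (g i - p i) * (ξ i - p i) * w i
  set B := ∑ i, (ξ i - p i) ^ 2 * w i
  have hseg : ∀ t : ℝ, 0 < t → t ≤ 1 → 0 ≤ -2 * A + t * B := by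
    intro t ht0 ht1
    have hmin := h.2 (fun i => p i + t * (ξ i - p i)) fun i j hij => by
      nlinarith [h.1 i j hij, hξ i j hij]
    have hexp : ∑ i, (p i + t * (ξ i - p i) - g i) ^ 2 * w i
        = ∑ i, (p i - g i) ^ 2 * w i + t * (-2 * A + t * B) := by
      simp only [A, B, Finset.mul_sum, ← Finset.sum_add_distrib]
      exact Finset.sum_congr rfl fun i _ => by ring
    rw [hexp] at hmin
    exact nonneg_of_mul_nonneg_right (by linarith) ht0
  have hlim : Tendsto (fun t : ℝ => -2 * A + t * B) (nhdsWithin 0 (Set.Ioi 0))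
      (nhds (-2 * A + 0 * B)) :=
    ((continuous_const.add (continuous_id.mul continuous_const)).tendsto 0).mono_left
      nhdsWithin_le_nhds
  have h2A : 0 ≤ -2 * A + 0 * B := ge_of_tendsto hlim <| by
    filter_upwards [Ioo_mem_nhdsGT one_pos] with t ht using hseg t ht.1 ht.2.le
  linarith

theorem sum_sq_sub_le {g' p' : ι → ℝ} (hw : ∀ i, 0 ≤ w i) (h : IsIsoReg r w g p)
    (h' : IsIsoReg r w g' p') :
    ∑ i, (p i - p' i) ^ 2 * w i ≤ ∑ i, (g i - g' i) ^ 2 * w i := by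
  set S := ∑ i, (p i - p' i) ^ 2 * w i
  set C := ∑ i, (g i - g' i) * (p i - p' i) * w i
  set G := ∑ i, (g i - g' i) ^ 2 * w i
  have hSC : S ≤ C := by
    have hsplit : S - C = ∑ i, (g i - p i) * (p' i - p i) * w i
        + ∑ i, (g' i - p' i) * (p i - p' i) * w i := by
      simp only [S, C, ← Finset.sum_sub_distrib, ← Finset.sum_add_distrib]
      exact Finset.sum_congr rfl fun i _ => by ring
    linarith [h.sum_mul_nonpos h'.1, h'.sum_mul_nonpos h.1]
  have hCSG : 2 * C ≤ S + G := by
    simp only [S, C, G, Finset.mul_sum, ← Finset.sum_add_distrib]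
    exact Finset.sum_le_sum fun i _ => by
      nlinarith [mul_nonneg (sq_nonneg (g i - g' i - (p i - p' i))) (hw i)]
  linarith

theorem unique {p' : ι → ℝ} (hw : ∀ i, 0 < w i) (h : IsIsoReg r w g p)
    (h' : IsIsoReg r w g p') : p = p' := by
  have hle := h.sum_sq_sub_le (fun i => (hw i).le) h'
  simp only [sub_self, ne_eq, OfNat.ofNat_ne_zero, not_false_eq_true, zero_pow, zero_mul,
    Finset.sum_const_zero] at hle
  have hzero := (Finset.sum_eq_zero_iff_of_nonneg fun i _ =>
    mul_nonneg (sq_nonneg (p i - p' i)) (hw i).le).mp (le_antisymm hle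
      (Finset.sum_nonneg fun i _ => mul_nonneg (sq_nonneg _) (hw i).le))
  funext i
  have := hzero i (Finset.mem_univ i)
  rw [mul_eq_zero, sq_eq_zero_iff, sub_eq_zero] at this
  exact this.resolve_right (hw i).ne'

/-- Clamping `p` into an interval containing the data does not increase the objective, so by
uniqueness the clamped vector is `p` itself. -/
theorem mem_Icc (hw : ∀ i, 0 < w i) (h : IsIsoReg r w g p) {a b : ℝ}
    (hg : ∀ i, g i ∈ Set.Icc a b) (i : ι) : p i ∈ Set.Icc a b := by
  have hab : a ≤ b := (hg i).1.trans (hg i).2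
  set ξ : ι → ℝ := fun j => Set.projIcc a b hab (p j)
  have hξ : IsIsoReg r w g ξ := by
    refine ⟨fun j k hjk => Set.monotone_projIcc hab (h.1 j k hjk), fun ζ hζ => ?_⟩
    refine le_trans (Finset.sum_le_sum fun j _ => ?_) (h.2 ζ hζ)
    have hclamp : |ξ j - g j| ≤ |p j - g j| := by
      simpa only [ξ, Set.projIcc_of_mem hab (hg j)] using
        Set.abs_projIcc_sub_projIcc hab (c := p j) (d := g j)
    exact mul_le_mul_of_nonneg_right (sq_le_sq.mpr hclamp) (hw j).le
  rw [h.unique hw hξ]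
  exact Subtype.mem _

theorem affine (h : IsIsoReg r w g p) {c a : ℝ} (hc : 0 < c) :
    IsIsoReg r w (fun i => c * (g i - a)) (fun i => c * (p i - a)) := by
  refine ⟨fun i j hij => by nlinarith [h.1 i j hij], fun ξ hξ => ?_⟩
  have hmin := h.2 (fun i => ξ i / c + a) fun i j hij => by
    have := div_le_div_of_nonneg_right (hξ i j hij) hc.le
    linarith
  have hscale : ∀ ζ : ι → ℝ, ∑ i, (ζ i - c * (g i - a)) ^ 2 * w i
      = c ^ 2 * ∑ i, ((ζ i - c * (g i - a)) / c) ^ 2 * w i := by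
    intro ζ
    rw [Finset.mul_sum]
    exact Finset.sum_congr rfl fun i _ => by field_simp
  rw [hscale, hscale]
  refine mul_le_mul_of_nonneg_left ?_ (sq_nonneg c)
  convert hmin using 3 with i _ i _ <;> congr 1 <;> field_simp <;> ring

theorem sq_sub_mul_le {g' p' : ι → ℝ} (hw : ∀ i, 0 ≤ w i) (h : IsIsoReg r w g p)
    (h' : IsIsoReg r w g' p') (i : ι) :
    (p i - p' i) ^ 2 * w i ≤ (∑ j, w j) * dist g g' ^ 2 :=
  calc (p i - p' i) ^ 2 * w i ≤ ∑ j, (p j - p' j) ^ 2 * w j :=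
        Finset.single_le_sum (f := fun j => (p j - p' j) ^ 2 * w j)
          (fun j _ => mul_nonneg (sq_nonneg _) (hw j)) (Finset.mem_univ i)
    _ ≤ ∑ j, (g j - g' j) ^ 2 * w j := h.sum_sq_sub_le hw h'
    _ ≤ ∑ j, dist g g' ^ 2 * w j := Finset.sum_le_sum fun j _ => by
        refine mul_le_mul_of_nonneg_right ?_ (hw j)
        rw [← sq_abs, ← Real.dist_eq]
        exact pow_le_pow_left₀ dist_nonneg (dist_le_pi_dist g g' j) 2
    _ = (∑ j, w j) * dist g g' ^ 2 := by rw [← Finset.mul_sum, mul_comm]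

end IsIsoReg

/-- `p = φ θ` in the paper's notation, with the comparable level sets given as the fibres
of `L`. -/
def IsBlockIsoReg {ι V : Type*} [Fintype ι] [DecidableEq V] (r : ι → ι → Prop) (w : ι → ℝ)
    (L : ι → V) (θ p : ι → ℝ) : Prop :=
  ∀ v : V, IsIsoReg (fun a b : {i // L i = v} => r a b) (fun a => w a) (fun a => θ a)
    (fun a => p a)

namespace IsBlockIsoReg

variable {ι V : Type*} [Fintype ι] [DecidableEq V] {r : ι → ι → Prop} {w : ι → ℝ} {L : ι → V}
  {θ p : ι → ℝ}

theorem isIsoReg [Fintype V] (h : IsBlockIsoReg r w L θ p) (hp : ∀ i j, r i j → p i ≤ p j) :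
    IsIsoReg r w θ p := by
  classical
  refine ⟨hp, fun ξ hξ => ?_⟩
  rw [← Fintype.sum_fiberwise L, ← Fintype.sum_fiberwise L]
  exact Finset.sum_le_sum fun v _ =>
    (h v).2 (fun a => ξ a) fun a b hab => hξ a b hab

theorem unique {p' : ι → ℝ} (hw : ∀ i, 0 < w i) (h : IsBlockIsoReg r w L θ p)
    (h' : IsBlockIsoReg r w L θ p') : p = p' :=
  funext fun i =>
    congrFun ((h (L i)).unique (fun a : {j // L j = L i} => hw a) (h' (L i))) ⟨i, rfl⟩

theorem eq_affine {c a p' : ι → ℝ} (hw : ∀ i, 0 < w i) (h : IsBlockIsoReg r w L θ p)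
    (hc : ∀ i, 0 < c i) (hcL : ∀ i j, L i = L j → c i = c j)
    (haL : ∀ i j, L i = L j → a i = a j)
    (h' : IsBlockIsoReg r w L (fun i => c i * (θ i - a i)) p') :
    p' = fun i => c i * (p i - a i) := by
  funext i
  have hdata : (fun b : {j // L j = L i} => c b * (θ b - a b))
      = fun b : {j // L j = L i} => c i * (θ b - a i) :=
    funext fun b => by rw [hcL b i b.2, haL b i b.2]
  have hi := (h' (L i)).unique (fun b : {j // L j = L i} => hw b)
    (hdata ▸ (h (L i)).affine (hc i))
  exact congrFun hi ⟨i, rfl⟩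

theorem abs_sub_le {g₀ : ι → ℝ} {ε : ℝ} (hw : ∀ i, 0 < w i) (h : IsBlockIsoReg r w L θ p)
    (hg₀ : ∀ i j, L i = L j → g₀ i = g₀ j) (hθ : ∀ i, |θ i - g₀ i| ≤ ε) (i : ι) :
    |p i - g₀ i| ≤ ε := by
  have hmem := (h (L i)).mem_Icc (fun b : {j // L j = L i} => hw b)
    (a := g₀ i - ε) (b := g₀ i + ε)
    (fun b => by
      have := abs_le.mp (hθ b)
      rw [hg₀ b i b.2] at this
      constructor <;> linarith [this.1, this.2]) ⟨i, rfl⟩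
  exact abs_le.mpr ⟨by linarith [hmem.1], by linarith [hmem.2]⟩

/-- Near `g₀`, the blocks are separated by the gap `δ` of `g₀` across comparable pairs, so the
blockwise regression is already isotone for `r`. -/
theorem isIsoReg_of_near [Fintype V] {g₀ : ι → ℝ} {δ : ℝ} (hw : ∀ i, 0 < w i)
    (h : IsBlockIsoReg r w L θ p) (hg₀ : ∀ i j, L i = L j → g₀ i = g₀ j)
    (hgap : ∀ i j, r i j → L i ≠ L j → g₀ i + δ ≤ g₀ j)
    (hθ : ∀ i, |θ i - g₀ i| ≤ δ / 2) : IsIsoReg r w θ p := by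
  refine h.isIsoReg fun i j hij => ?_
  by_cases hL : L i = L j
  · exact (h (L j)).1 ⟨i, hL⟩ ⟨j, rfl⟩ hij
  · have hi := abs_le.mp (h.abs_sub_le hw hg₀ hθ i)
    have hj := abs_le.mp (h.abs_sub_le hw hg₀ hθ j)
    linarith [hgap i j hij hL]

end IsBlockIsoReg

theorem continuous_of_isBlockIsoReg {ι V : Type*} [Fintype ι] [DecidableEq V]
    {r : ι → ι → Prop} {w : ι → ℝ} {L : ι → V} {ψ : (ι → ℝ) → ι → ℝ} (hw : ∀ i, 0 < w i)
    (hψ : ∀ θ, IsBlockIsoReg r w L θ (ψ θ)) : Continuous ψ := by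
  refine continuous_pi fun i => ?_
  set K := (∑ b : {j // L j = L i}, w b) / w i
  refine (LipschitzWith.of_dist_le_mul (K := (√K).toNNReal) fun θ θ' => ?_).continuous
  have hsq : (ψ θ i - ψ θ' i) ^ 2 ≤ K * dist θ θ' ^ 2 := by
    have hcoord := (hψ θ (L i)).sq_sub_mul_le (fun b : {j // L j = L i} => (hw b).le)
      (hψ θ' (L i)) ⟨i, rfl⟩
    have hrestrict : dist (fun b : {j // L j = L i} => θ b) (fun b => θ' b) ≤ dist θ θ' :=
      (dist_pi_le_iff dist_nonneg).mpr fun b => dist_le_pi_dist θ θ' b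
    rw [div_mul_eq_mul_div, le_div_iff₀ (hw i)]
    refine hcoord.trans (mul_le_mul_of_nonneg_left ?_
      (Finset.sum_nonneg fun b _ => (hw b).le))
    exact pow_le_pow_left₀ dist_nonneg hrestrict 2
  rw [Real.coe_toNNReal _ (Real.sqrt_nonneg _), Real.dist_eq]
  calc |ψ θ i - ψ θ' i| ≤ √(K * dist θ θ' ^ 2) := Real.abs_le_sqrt hsq
    _ = √K * dist θ θ' := by rw [Real.sqrt_mul' _ (sq_nonneg _), Real.sqrt_sq dist_nonneg]

theorem exists_pos_forall_add_le {ι V : Type*} [Fintype ι] {r : ι → ι → Prop} {L : ι → V}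
    {g₀ : ι → ℝ} (hg₀ : ∀ i j, r i j → g₀ i ≤ g₀ j)
    (hL : ∀ i j, r i j → g₀ i = g₀ j → L i = L j) :
    ∃ δ > 0, ∀ i j, r i j → L i ≠ L j → g₀ i + δ ≤ g₀ j := by
  classical
  set S := (Finset.univ : Finset (ι × ι)).filter fun x => r x.1 x.2 ∧ L x.1 ≠ L x.2
  have hmem : ∀ i j, r i j → L i ≠ L j → (i, j) ∈ S := fun i j hij hLij =>
    Finset.mem_filter.mpr ⟨Finset.mem_univ _, hij, hLij⟩
  rcases S.eq_empty_or_nonempty with hS | hS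
  · exact ⟨1, one_pos, fun i j hij hLij => by simpa [hS] using hmem i j hij hLij⟩
  obtain ⟨x, hx, hmin⟩ := S.exists_min_image (fun x => g₀ x.2 - g₀ x.1) hS
  obtain ⟨hrx, hLx⟩ := (Finset.mem_filter.mp hx).2
  refine ⟨g₀ x.2 - g₀ x.1, ?_, fun i j hij hLij => ?_⟩
  · exact sub_pos.mpr ((hg₀ _ _ hrx).lt_of_ne fun he => hLx (hL _ _ hrx he))
  · linarith [hmin (i, j) (hmem i j hij hLij)]

theorem tendsto_integral_of_eqOn_compl {Ω : Type*} [MeasurableSpace Ω] {μ : Measure Ω}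
    [IsFiniteMeasure μ] {F G : ℕ → Ω → ℝ} {A : ℕ → Set Ω} {C l : ℝ}
    (hF : ∀ n, AEStronglyMeasurable (F n) μ) (hG : ∀ n, AEStronglyMeasurable (G n) μ)
    (hFC : ∀ n ω, ‖F n ω‖ ≤ C) (hGC : ∀ n ω, ‖G n ω‖ ≤ C)
    (hA : Tendsto (fun n => μ (A n)) atTop (nhds 0))
    (hFG : ∀ᶠ n in atTop, Set.EqOn (F n) (G n) (A n)ᶜ)
    (hGl : Tendsto (fun n => ∫ ω, G n ω ∂μ) atTop (nhds l)) :
    Tendsto (fun n => ∫ ω, F n ω ∂μ) atTop (nhds l) := by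
  have hAreal : Tendsto (fun n => 2 * C * μ.real (A n)) atTop (nhds 0) := by
    simpa [measureReal_def] using
      ((ENNReal.tendsto_toReal ENNReal.zero_ne_top).comp hA).const_mul (2 * C)
  have hdiff : Tendsto (fun n => ∫ ω, F n ω ∂μ - ∫ ω, G n ω ∂μ) atTop (nhds 0) := by
    refine squeeze_zero_norm' ?_ hAreal
    filter_upwards [hFG] with n hn
    rw [← integral_sub (.of_bound (hF n) C (ae_of_all _ (hFC n)))
        (.of_bound (hG n) C (ae_of_all _ (hGC n))),
      ← setIntegral_eq_integral_of_forall_compl_eq_zero fun ω hω => sub_eq_zero.mpr (hn hω)]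
    exact norm_setIntegral_le_of_norm_le_const (measure_lt_top _ _) fun ω _ =>
      (norm_sub_le _ _).trans (by linarith [hFC n ω, hGC n ω])
  simpa using hdiff.add hGl

theorem stmt_17_general {s : ℕ} (r : Fin s → Fin s → Prop)
    (w : Fin s → ℝ) (hw : ∀ i, 0 < w i)
    {Ω : Type*} [MeasurableSpace Ω] (μ : Measure Ω) [IsProbabilityMeasure μ]
    (ghat ghatstar : ℕ → Ω → Fin s → ℝ) (g0 : Fin s → ℝ)
    (hg0 : ∀ i j, r i j → g0 i ≤ g0 j)
    -- `L` is the canonical partition of the index set into the comparable level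
    -- sets of `g0`:
    {m : ℕ} (L : Fin s → Fin m)
    (hLconst : ∀ i j, L i = L j → g0 i = g0 j)
    (hLclosed : ∀ i j, (r i j ∨ r j i) → g0 i = g0 j → L i = L j)
    -- rates of convergence, positive and constant on each comparable level set:
    (q : Fin s → ℝ) (hqL : ∀ i j, L i = L j → q i = q j)
    -- `ψ` maps a vector to the concatenation of the separate isotonic regressions
    -- of its restrictions to the comparable level sets of `g0`:
    (ψ : (Fin s → ℝ) → (Fin s → ℝ))
    (hψ : ∀ θ : (Fin s → ℝ), ∀ v : Fin m,
      IsIsoReg (fun a b : {i // L i = v} => r a b) (fun a => w a)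
        (fun a => θ a) (fun a => ψ θ a))
    -- `ghatstar n ω` is the isotonic regression of `ghat n ω`:
    (hreg : ∀ n ω, IsIsoReg r w (ghat n ω) (ghatstar n ω))
    (hmeas : ∀ n, Measurable (ghat n)) (hmeasstar : ∀ n, Measurable (ghatstar n))
    (Λ : Ω → Fin s → ℝ)
    -- `ghat n → g0` in probability:
    (hprob : ∀ ε : ℝ, 0 < ε →
      Tendsto (fun n => μ {ω | ε ≤ dist (ghat n ω) g0}) atTop (nhds 0))
    -- `Bₙ(ĝₙ - g̊) ⇒ λ` in distribution:
    (hdist : ∀ f : BoundedContinuousFunction (Fin s → ℝ) ℝ,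
      Tendsto (fun (n : ℕ) => ∫ ω, f (fun i => (n : ℝ) ^ (q i) * (ghat n ω i - g0 i)) ∂μ)
        atTop (nhds (∫ ω, f (Λ ω) ∂μ))) :
    -- conclusion: `Bₙ(ĝₙ* - g̊) ⇒ φ(λ)`:
    ∀ f : BoundedContinuousFunction (Fin s → ℝ) ℝ,
      Tendsto (fun (n : ℕ) => ∫ ω, f (fun i => (n : ℝ) ^ (q i) * (ghatstar n ω i - g0 i)) ∂μ)
        atTop (nhds (∫ ω, f (ψ (Λ ω)) ∂μ)) := by
  intro f
  obtain ⟨δ, hδ, hgap⟩ := exists_pos_forall_add_le (L := L) hg0 fun i j hij hg =>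
    hLclosed i j (.inl hij) hg
  have hψ' : ∀ θ, IsBlockIsoReg r w L θ (ψ θ) := hψ
  have hψc : Continuous ψ := continuous_of_isBlockIsoReg hw hψ'
  set B : ℕ → (Fin s → ℝ) → Fin s → ℝ := fun n x i => (n : ℝ) ^ (q i) * (x i - g0 i)
  have hB : ∀ n, Continuous (B n) := fun n => by fun_prop
  refine tendsto_integral_of_eqOn_compl (C := ‖f‖)
    (A := fun n => {ω | δ / 2 ≤ dist (ghat n ω) g0}) (G := fun n ω => f (ψ (B n (ghat n ω))))
    (fun n => ((f.continuous.comp (hB n)).measurable.comp (hmeasstar n)).aestronglyMeasurable)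
    (fun n => ((f.continuous.comp (hψc.comp (hB n))).measurable.comp
      (hmeas n)).aestronglyMeasurable)
    (fun n ω => f.norm_coe_le_norm _) (fun n ω => f.norm_coe_le_norm _)
    (hprob _ (half_pos hδ)) ?_ (hdist (f.compContinuous ⟨ψ, hψc⟩))
  filter_upwards [eventually_ge_atTop 1] with n hn ω hω
  have hnear : ∀ i, |ghat n ω i - g0 i| ≤ δ / 2 := fun i => by
    rw [← Real.dist_eq]
    exact (dist_le_pi_dist _ _ i).trans (not_le.mp (Set.notMem_ofPred_iff.mp hω)).le
  have hstar : ghatstar n ω = ψ (ghat n ω) :=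
    (hreg n ω).unique hw ((hψ' _).isIsoReg_of_near hw hLconst hgap hnear)
  have hrate : ∀ i, 0 < (n : ℝ) ^ q i := fun i => Real.rpow_pos_of_pos (by exact_mod_cast hn) _
  have hequiv : ψ (B n (ghat n ω)) = B n (ψ (ghat n ω)) :=
    (hψ' _).eq_affine hw hrate (fun i j hij => by rw [hqL i j hij]) hLconst (hψ' _)
  show f (B n (ghatstar n ω)) = f (ψ (B n (ghat n ω)))
  rw [hstar, hequiv]

/-- the limit distribution of the isotonic regression estimator over a
finite pre-ordered index set: if `Bₙ(ĝₙ - g̊) ⇒ λ` then `Bₙ(ĝₙ* - g̊) ⇒ φ(λ)`, where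
`φ` performs separate isotonic regressions on the comparable level sets of `g̊`
(given by the level map `L`). Convergence in distribution is expressed via bounded
continuous test functions. -/
theorem stmt_17 {s : ℕ} (r : Fin s → Fin s → Prop)
    (hrefl : ∀ i, r i i) (htrans : ∀ i j k, r i j → r j k → r i k)
    (w : Fin s → ℝ) (hw : ∀ i, 0 < w i)
    {Ω : Type*} [MeasurableSpace Ω] (μ : Measure Ω) [IsProbabilityMeasure μ]
    (ghat ghatstar : ℕ → Ω → Fin s → ℝ) (g0 : Fin s → ℝ)
    (hg0 : ∀ i j, r i j → g0 i ≤ g0 j)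
    -- `L` is the canonical partition of the index set into the comparable level
    -- sets of `g0`:
    {m : ℕ} (L : Fin s → Fin m)
    (hLconst : ∀ i j, L i = L j → g0 i = g0 j)
    (hLclosed : ∀ i j, (r i j ∨ r j i) → g0 i = g0 j → L i = L j)
    (hLconn : ∀ i j, L i = L j →
      Relation.ReflTransGen (fun a b => (r a b ∨ r b a) ∧ g0 a = g0 b) i j)
    -- rates of convergence, positive and constant on each comparable level set:
    (q : Fin s → ℝ) (hq : ∀ i, 0 < q i) (hqL : ∀ i j, L i = L j → q i = q j)
    -- `ψ` maps a vector to the concatenation of the separate isotonic regressions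
    -- of its restrictions to the comparable level sets of `g0`:
    (ψ : (Fin s → ℝ) → (Fin s → ℝ))
    (hψ : ∀ θ : (Fin s → ℝ), ∀ v : Fin m,
      IsIsoReg (fun a b : {i // L i = v} => r a b) (fun a => w a)
        (fun a => θ a) (fun a => ψ θ a))
    -- `ghatstar n ω` is the isotonic regression of `ghat n ω`:
    (hreg : ∀ n ω, IsIsoReg r w (ghat n ω) (ghatstar n ω))
    (hmeas : ∀ n, Measurable (ghat n)) (hmeasstar : ∀ n, Measurable (ghatstar n))
    (Λ : Ω → Fin s → ℝ) (hΛ : Measurable Λ)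
    -- `ghat n → g0` in probability:
    (hprob : ∀ ε : ℝ, 0 < ε →
      Tendsto (fun n => μ {ω | ε ≤ dist (ghat n ω) g0}) atTop (nhds 0))
    -- `Bₙ(ĝₙ - g̊) ⇒ λ` in distribution:
    (hdist : ∀ f : BoundedContinuousFunction (Fin s → ℝ) ℝ,
      Tendsto (fun (n : ℕ) => ∫ ω, f (fun i => (n : ℝ) ^ (q i) * (ghat n ω i - g0 i)) ∂μ)
        atTop (nhds (∫ ω, f (Λ ω) ∂μ))) :
    -- conclusion: `Bₙ(ĝₙ* - g̊) ⇒ φ(λ)`: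
    ∀ f : BoundedContinuousFunction (Fin s → ℝ) ℝ,
      Tendsto (fun (n : ℕ) => ∫ ω, f (fun i => (n : ℝ) ^ (q i) * (ghatstar n ω i - g0 i)) ∂μ)
        atTop (nhds (∫ ω, f (ψ (Λ ω)) ∂μ)) :=
  stmt_17_general r w hw μ ghat ghatstar g0 hg0 L hLconst hLclosed q hqL ψ hψ hreg hmeas hmeasstar Λ
    hprob hdist
end
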